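/- Let (X,φ) be a mixing synchronizing dynamical system and p, q synchronizing periodic points. Then the global stable set Xˢ(p), the global unstable set Xᵘ(q), and the intersection Xˢ(p) ∩ Xᵘ(q) are each dense in X. -/

import Mathlib

/-! In an adapted metric, local stable sets contract exponentially under `φ` and local unstable
sets under `φ⁻¹`. Let `O` be a neighbourhood of the periodic synchronizing point `p` on which the
bracket `[p, ·]` is defined. By mixing, the half-size ball `B` of any ball in an open set `U`
contains points `y` with `φⁿ y ∈ O` for arbitrarily large multiples `n` of the period of `p`; then
`φ⁻ⁿ [p, φⁿ y]` is stably equivalent to `p`, unstably equivalent to `y`, and within `λⁿ ε` of `y`,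
hence in `U`. Reversing time gives the density of `Xᵘ(q)`, and choosing `y ∈ Xᵘ(q)` gives the
density of the intersection. -/

open Filter Topology Set

namespace Paper

variable {X : Type*} [MetricSpace X] [CompactSpace X]

/-- The `n`-th iterate (for `n : ℤ`) of the homeomorphism `φ`. -/
def It (φ : X ≃ₜ X) (n : ℤ) : X → X := fun x => (φ.toEquiv ^ n) x

/-- The local stable set `Xˢ(x, ε)`. -/
def locS (φ : X ≃ₜ X) (x : X) (ε : ℝ) : Set X :=
  {y | ∀ n : ℕ, dist (It φ n x) (It φ n y) ≤ ε}

/-- The local unstable set `Xᵘ(x, ε)`. -/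
def locU (φ : X ≃ₜ X) (x : X) (ε : ℝ) : Set X :=
  {y | ∀ n : ℕ, dist (It φ (-(n : ℤ)) x) (It φ (-(n : ℤ)) y) ≤ ε}

/-- The set `D_ε` on which the bracket is defined. -/
def Dset (φ : X ≃ₜ X) (ε : ℝ) : Set (X × X) :=
  {p | (locS φ p.1 ε ∩ locU φ p.2 ε).Nonempty}

/-- `(X, φ)` is expansive with expansiveness constant `εX`. -/
def IsExpansive (φ : X ≃ₜ X) (εX : ℝ) : Prop :=
  0 < εX ∧ ∀ x y : X, (∀ n : ℤ, dist (It φ n x) (It φ n y) ≤ εX) → x = y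

/-- The metric is adapted (Fried), with constants `η` and `lam`. -/
def IsAdapted (φ : X ≃ₜ X) (η lam : ℝ) : Prop :=
  0 < η ∧ 0 < lam ∧ lam < 1 ∧
    (∀ x y : X, y ∈ locS φ x η → dist (φ x) (φ y) ≤ lam * dist x y) ∧
    (∀ x y : X, y ∈ locU φ x η → dist (φ.symm x) (φ.symm y) ≤ lam * dist x y)

/-- `p` is a periodic point of `φ`. -/
def IsPeriodic (φ : X ≃ₜ X) (p : X) : Prop :=
  ∃ n : ℕ, 1 ≤ n ∧ It φ n p = p

/-- `x` is a synchronizing point: `(x, x)` is in the interior of `D_ε` for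
some `0 < ε ≤ ε₀`. -/
def IsSyncPt (φ : X ≃ₜ X) (ε₀ : ℝ) (x : X) : Prop :=
  ∃ ε : ℝ, 0 < ε ∧ ε ≤ ε₀ ∧ (x, x) ∈ interior (Dset φ ε)

/-- `(X, φ)` is irreducible. -/
def Irred (φ : X ≃ₜ X) : Prop :=
  ∀ U V : Set X, IsOpen U → IsOpen V → U.Nonempty → V.Nonempty →
    ∃ n : ℕ, 0 < n ∧ (It φ n '' U ∩ V).Nonempty

/-- `(X, φ)` is mixing. -/
def Mixing (φ : X ≃ₜ X) : Prop :=
  ∀ U V : Set X, IsOpen U → IsOpen V → U.Nonempty → V.Nonempty →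
    ∃ N : ℕ, ∀ n : ℕ, N ≤ n → (It φ n '' U ∩ V).Nonempty

/-- Every point of `(X, φ)` is non-wandering. -/
def NonWandering (φ : X ≃ₜ X) : Prop :=
  ∀ x : X, ∀ U ∈ 𝓝 x, ∃ n : ℕ, 0 < n ∧ (It φ n '' U ∩ U).Nonempty

/-- Stable equivalence `x ∼ₛ y`. -/
def StableEq (φ : X ≃ₜ X) (x y : X) : Prop :=
  Tendsto (fun n : ℕ => dist (It φ n x) (It φ n y)) atTop (𝓝 0)

/-- Unstable equivalence `x ∼ᵤ y`. -/
def UnstableEq (φ : X ≃ₜ X) (x y : X) : Prop :=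
  Tendsto (fun n : ℕ => dist (It φ (-(n : ℤ)) x) (It φ (-(n : ℤ)) y)) atTop (𝓝 0)

/-- Local conjugacy `x ∼_lc y`: a homeomorphism `γ : U → V` of open
neighborhoods with `γ x = y` and `sup_{z ∈ U} d(φⁿ z, φⁿ (γ z)) → 0` as
`n → ±∞`. -/
def LocConj (φ : X ≃ₜ X) (x y : X) : Prop :=
  ∃ (U V : Set X) (γ γinv : X → X),
    IsOpen U ∧ IsOpen V ∧ x ∈ U ∧ y ∈ V ∧ γ x = y ∧
    Set.MapsTo γ U V ∧ Set.MapsTo γinv V U ∧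
    (∀ z ∈ U, γinv (γ z) = z) ∧ (∀ w ∈ V, γ (γinv w) = w) ∧
    ContinuousOn γ U ∧ ContinuousOn γinv V ∧
    (∀ ε : ℝ, 0 < ε → ∃ N : ℕ, ∀ n : ℤ, (N : ℤ) ≤ |n| → ∀ z ∈ U,
      dist (It φ n z) (It φ n (γ z)) ≤ ε)

/-- Stable local conjugacy `x ∼_lcs y`: a homeomorphism of `Xᵘ(x, δ)` onto
its image in `Xᵘ(y, δ')` sending `x` to `y`, uniformly asymptotic in forward
time. -/
def StableLC (φ : X ≃ₜ X) (x y : X) : Prop :=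
  ∃ (δ δ' : ℝ) (γ : X → X), 0 < δ ∧ 0 < δ' ∧
    Set.MapsTo γ (locU φ x δ) (locU φ y δ') ∧
    Set.InjOn γ (locU φ x δ) ∧ ContinuousOn γ (locU φ x δ) ∧ γ x = y ∧
    (∀ ε : ℝ, 0 < ε → ∃ N : ℕ, ∀ n : ℕ, N ≤ n → ∀ z ∈ locU φ x δ,
      dist (It φ n z) (It φ n (γ z)) ≤ ε)

/-- Unstable local conjugacy `x ∼_lcu y`: a homeomorphism of `Xˢ(x, δ)` onto
its image in `Xˢ(y, δ')` sending `x` to `y`, uniformly asymptotic in backward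
time. -/
def UnstableLC (φ : X ≃ₜ X) (x y : X) : Prop :=
  ∃ (δ δ' : ℝ) (γ : X → X), 0 < δ ∧ 0 < δ' ∧
    Set.MapsTo γ (locS φ x δ) (locS φ y δ') ∧
    Set.InjOn γ (locS φ x δ) ∧ ContinuousOn γ (locS φ x δ) ∧ γ x = y ∧
    (∀ ε : ℝ, 0 < ε → ∃ N : ℕ, ∀ n : ℕ, N ≤ n → ∀ z ∈ locS φ x δ,
      dist (It φ (-(n : ℤ)) z) (It φ (-(n : ℤ)) (γ z)) ≤ ε)

end Paper

namespace Paper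

section Dynamics

variable {X : Type*} [MetricSpace X] {φ : X ≃ₜ X}

theorem It_eq_zpow (φ : X ≃ₜ X) (n : ℤ) : It φ n = ⇑(φ ^ n) :=
  congrArg DFunLike.coe
    (map_zpow (MonoidHom.mk' (Homeomorph.toEquiv : (X ≃ₜ X) → Equiv.Perm X) fun _ _ => rfl) φ n).symm

theorem It_natCast (φ : X ≃ₜ X) (n : ℕ) : It φ n = φ^[n] := by
  funext x
  simp only [It, zpow_natCast, Equiv.Perm.coe_pow]
  rfl

theorem It_add (φ : X ≃ₜ X) (a b : ℤ) (x : X) : It φ (a + b) x = It φ a (It φ b x) := by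
  simp [It_eq_zpow, zpow_add]

theorem It_neg_It (φ : X ≃ₜ X) (n : ℤ) (x : X) : It φ (-n) (It φ n x) = x := by
  rw [← It_add, neg_add_cancel]; rfl

theorem It_symm (φ : X ≃ₜ X) (n : ℤ) : It φ.symm n = It φ (-n) := by
  rw [It_eq_zpow, It_eq_zpow, ← inv_zpow']; rfl

theorem continuous_It (φ : X ≃ₜ X) (n : ℤ) : Continuous (It φ n) := by
  rw [It_eq_zpow]; exact (φ ^ n).continuous

theorem IsPeriodic.frequently_It_eq {p : X} (hp : IsPeriodic φ p) :
    ∃ᶠ n : ℕ in atTop, It φ n p = p := by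
  obtain ⟨m, hm, hmp⟩ := hp
  rw [It_natCast] at hmp
  refine frequently_atTop.2 fun a => ⟨m * a, Nat.le_mul_of_pos_left a hm, ?_⟩
  rw [It_natCast]
  exact (Function.IsPeriodicPt.mul_const hmp a).eq

theorem mem_locS_iff {x y : X} {ε : ℝ} :
    y ∈ locS φ x ε ↔ ∀ n : ℕ, dist (φ^[n] x) (φ^[n] y) ≤ ε := by
  simp [locS, It_natCast]

theorem locS_symm (x : X) (ε : ℝ) : locS φ.symm x ε = locU φ x ε := by
  ext y; simp [locS, locU, It_symm]

theorem locU_symm (x : X) (ε : ℝ) : locU φ.symm x ε = locS φ x ε := by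
  ext y; simp [locS, locU, It_symm]

theorem stableEq_symm {x y : X} : StableEq φ.symm x y ↔ UnstableEq φ x y := by
  simp [StableEq, UnstableEq, It_symm]

theorem IsAdapted.symm {η lam : ℝ} (had : IsAdapted φ η lam) : IsAdapted φ.symm η lam := by
  obtain ⟨hη, hlam0, hlam1, hS, hU⟩ := had
  exact ⟨hη, hlam0, hlam1, by simpa [locS_symm] using hU, by simpa [locU_symm] using hS⟩

theorem Mixing.symm (hmix : Mixing φ) : Mixing φ.symm := by
  intro U V hU hV hUne hVne
  obtain ⟨N, hN⟩ := hmix V U hV hU hVne hUne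
  refine ⟨N, fun n hn => ?_⟩
  obtain ⟨_, ⟨v, hv, rfl⟩, hu⟩ := hN n hn
  exact ⟨v, ⟨_, hu, by rw [It_symm, It_neg_It]⟩, hv⟩

theorem IsPeriodic.symm {p : X} (hp : IsPeriodic φ p) : IsPeriodic φ.symm p := by
  obtain ⟨m, hm, hmp⟩ := hp
  exact ⟨m, hm, by rw [It_symm, ← congrArg (It φ (-m)) hmp, It_neg_It]⟩

theorem IsSyncPt.symm {ε₀ : ℝ} {x : X} (hx : IsSyncPt φ ε₀ x) : IsSyncPt φ.symm ε₀ x := by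
  obtain ⟨ε, hε, hεε₀, hint⟩ := hx
  have hD : Dset φ.symm ε = Prod.swap ⁻¹' Dset φ ε := by
    ext ⟨a, b⟩; simp [Dset, locS_symm, locU_symm, Set.inter_comm]
  refine ⟨ε, hε, hεε₀, ?_⟩
  rw [hD, mem_interior_iff_mem_nhds]
  exact continuous_swap.continuousAt.preimage_mem_nhds (mem_interior_iff_mem_nhds.1 hint)

theorem IsSyncPt.mono {ε₀ ε₁ : ℝ} {x : X} (hx : IsSyncPt φ ε₀ x) (h : ε₀ ≤ ε₁) :
    IsSyncPt φ ε₁ x :=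
  let ⟨ε, hε, hεε₀, hint⟩ := hx
  ⟨ε, hε, hεε₀.trans h, hint⟩

theorem IsSyncPt.exists_isOpen_bracket {ε₀ : ℝ} {p : X} (hp : IsSyncPt φ ε₀ p) :
    ∃ ε ≤ ε₀, ∃ O : Set X, IsOpen O ∧ p ∈ O ∧ ∀ b ∈ O, (locS φ p ε ∩ locU φ b ε).Nonempty := by
  obtain ⟨ε, -, hεε₀, hint⟩ := hp
  have hslice : (fun b => (p, b)) ⁻¹' interior (Dset φ ε) ∈ 𝓝 p :=
    (Continuous.prodMk_right p).continuousAt.preimage_mem_nhds (isOpen_interior.mem_nhds hint)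
  obtain ⟨O, hOsub, hO, hpO⟩ := mem_nhds_iff.1 hslice
  exact ⟨ε, hεε₀, O, hO, hpO, fun b hb => interior_subset (s := Dset φ ε) (hOsub hb)⟩

theorem mem_locS_apply {x y : X} {ε : ℝ} (hy : y ∈ locS φ x ε) : φ y ∈ locS φ (φ x) ε := by
  rw [mem_locS_iff] at hy ⊢
  intro n
  simpa only [← Function.iterate_succ_apply] using hy (n + 1)

theorem IsAdapted.dist_iterate_le {η lam : ℝ} (had : IsAdapted φ η lam) {x y : X}
    (hy : y ∈ locS φ x η) (n : ℕ) : dist (φ^[n] x) (φ^[n] y) ≤ lam ^ n * dist x y := by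
  obtain ⟨-, hlam, -, hcontract, -⟩ := had
  induction n generalizing x y with
  | zero => simp
  | succ n ih =>
    calc dist (φ^[n + 1] x) (φ^[n + 1] y) = dist (φ^[n] (φ x)) (φ^[n] (φ y)) := rfl
      _ ≤ lam ^ n * dist (φ x) (φ y) := ih (mem_locS_apply hy)
      _ ≤ lam ^ n * (lam * dist x y) := by gcongr; exact hcontract x y hy
      _ = lam ^ (n + 1) * dist x y := by ring

theorem IsAdapted.dist_It_le {η lam ε : ℝ} (had : IsAdapted φ η lam) (hε : ε ≤ η) {x y : X}
    (hy : y ∈ locS φ x ε) (n : ℕ) : dist (It φ n x) (It φ n y) ≤ lam ^ n * ε := by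
  have hyη : y ∈ locS φ x η := fun k => (hy k).trans hε
  rw [It_natCast]
  calc dist (φ^[n] x) (φ^[n] y) ≤ lam ^ n * dist x y := had.dist_iterate_le hyη n
    _ ≤ lam ^ n * ε := by
      gcongr
      · exact pow_nonneg had.2.1.le n
      · simpa using (mem_locS_iff.1 hy 0)

theorem IsAdapted.tendsto_pow_mul {η lam : ℝ} (had : IsAdapted φ η lam) (ε : ℝ) :
    Tendsto (fun n : ℕ => lam ^ n * ε) atTop (𝓝 0) := by
  simpa using (tendsto_pow_atTop_nhds_zero_of_lt_one had.2.1.le had.2.2.1).mul_const ε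

theorem IsAdapted.stableEq_of_mem_locS {η lam ε : ℝ} (had : IsAdapted φ η lam) (hε : ε ≤ η)
    {x y : X} (hy : y ∈ locS φ x ε) : StableEq φ x y :=
  squeeze_zero (fun _ => dist_nonneg) (had.dist_It_le hε hy) (had.tendsto_pow_mul ε)

theorem IsAdapted.dist_It_neg_le {η lam ε : ℝ} (had : IsAdapted φ η lam) (hε : ε ≤ η)
    {x y : X} (hy : y ∈ locU φ x ε) (n : ℕ) :
    dist (It φ (-n) x) (It φ (-n) y) ≤ lam ^ n * ε := by
  simpa only [It_symm] using had.symm.dist_It_le hε (by rwa [locS_symm]) n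

theorem IsAdapted.unstableEq_of_mem_locU {η lam ε : ℝ} (had : IsAdapted φ η lam) (hε : ε ≤ η)
    {x y : X} (hy : y ∈ locU φ x ε) : UnstableEq φ x y :=
  stableEq_symm.1 (had.symm.stableEq_of_mem_locS hε (by rwa [locS_symm]))

theorem stableEq_iff_tendsto_int {x y : X} :
    StableEq φ x y ↔ Tendsto (fun n : ℤ => dist (It φ n x) (It φ n y)) atTop (𝓝 0) := by
  rw [StableEq, ← Nat.map_cast_int_atTop, tendsto_map'_iff]
  rfl

theorem StableEq.It {x y : X} (h : StableEq φ x y) (k : ℤ) :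
    StableEq φ (It φ k x) (It φ k y) := by
  rw [stableEq_iff_tendsto_int] at h ⊢
  rw [← map_add_atTop_eq k, tendsto_map'_iff] at h
  simpa only [Function.comp_def, It_add] using h

theorem StableEq.trans {x y z : X} (hxy : StableEq φ x y) (hyz : StableEq φ y z) :
    StableEq φ x z :=
  squeeze_zero (fun _ => dist_nonneg) (fun _ => dist_triangle _ _ _) (by simpa using hxy.add hyz)

theorem UnstableEq.It {x y : X} (h : UnstableEq φ x y) (k : ℤ) :
    UnstableEq φ (It φ k x) (It φ k y) := by
  rw [← stableEq_symm] at h ⊢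
  simpa only [It_symm, neg_neg] using h.It (-k)

theorem UnstableEq.trans {x y z : X} (hxy : UnstableEq φ x y) (hyz : UnstableEq φ y z) :
    UnstableEq φ x z := by
  rw [← stableEq_symm] at *
  exact hxy.trans hyz

theorem exists_isOpen_forall_exists_stableEq {η lam : ℝ} (had : IsAdapted φ η lam)
    (hmix : Mixing φ) {p : X} (hp : IsPeriodic φ p) (hps : IsSyncPt φ η p) {U : Set X}
    (hU : IsOpen U) (hUne : U.Nonempty) :
    ∃ V : Set X, IsOpen V ∧ V.Nonempty ∧ ∀ y ∈ V, ∃ w ∈ U, StableEq φ p w ∧ UnstableEq φ y w := by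
  obtain ⟨ε, hεη, O, hO, hpO, hbracket⟩ := hps.exists_isOpen_bracket
  obtain ⟨z, hz⟩ := hUne
  obtain ⟨r, hr, hball⟩ := Metric.isOpen_iff.1 hU z hz
  obtain ⟨N, hN⟩ := hmix _ O Metric.isOpen_ball hO ⟨z, Metric.mem_ball_self (half_pos hr)⟩ ⟨p, hpO⟩
  obtain ⟨n, hpn, hnN, hsmall⟩ : ∃ n : ℕ, It φ n p = p ∧ N ≤ n ∧ lam ^ n * ε < r / 2 :=
    (hp.frequently_It_eq.and_eventually ((eventually_ge_atTop N).and
      ((had.tendsto_pow_mul ε).eventually (gt_mem_nhds (half_pos hr))))).exists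
  refine ⟨Metric.ball z (r / 2) ∩ It φ n ⁻¹' O,
    Metric.isOpen_ball.inter (hO.preimage (continuous_It φ n)), ?_, ?_⟩
  · obtain ⟨_, ⟨u, hu, rfl⟩, huO⟩ := hN n hnN
    exact ⟨u, hu, huO⟩
  rintro y ⟨hy, hyO⟩
  obtain ⟨w, hwS, hwU⟩ := hbracket _ hyO
  refine ⟨It φ (-n) w, hball ?_, ?_, ?_⟩
  · have hwy : dist y (It φ (-n) w) ≤ lam ^ n * ε := by
      simpa only [It_neg_It] using had.dist_It_neg_le hεη hwU n
    rw [Metric.mem_ball, dist_comm] at hy ⊢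
    calc dist z (It φ (-n) w) ≤ dist z y + dist y (It φ (-n) w) := dist_triangle _ _ _
      _ < r := by linarith
  · have hpn' : It φ (-n) p = p := by
      nth_rewrite 1 [← hpn]
      exact It_neg_It φ n p
    simpa only [hpn'] using (had.stableEq_of_mem_locS hεη hwS).It (-n)
  · simpa only [It_neg_It] using (had.unstableEq_of_mem_locU hεη hwU).It (-n)

theorem dense_stableEq {η lam : ℝ} (had : IsAdapted φ η lam) (hmix : Mixing φ) {p : X}
    (hp : IsPeriodic φ p) (hps : IsSyncPt φ η p) : Dense {z | StableEq φ p z} := by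
  refine dense_iff_inter_open.2 fun U hU hUne => ?_
  obtain ⟨V, -, ⟨y, hy⟩, hV⟩ := exists_isOpen_forall_exists_stableEq had hmix hp hps hU hUne
  obtain ⟨w, hwU, hpw, -⟩ := hV y hy
  exact ⟨w, hwU, hpw⟩

theorem dense_unstableEq {η lam : ℝ} (had : IsAdapted φ η lam) (hmix : Mixing φ) {q : X}
    (hq : IsPeriodic φ q) (hqs : IsSyncPt φ η q) : Dense {z | UnstableEq φ q z} := by
  simpa only [stableEq_symm] using dense_stableEq had.symm hmix.symm hq.symm hqs.symm

theorem dense_stableEq_inter_unstableEq {η lam : ℝ} (had : IsAdapted φ η lam)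
    (hmix : Mixing φ) {p q : X} (hp : IsPeriodic φ p) (hq : IsPeriodic φ q)
    (hps : IsSyncPt φ η p) (hqs : IsSyncPt φ η q) :
    Dense ({z | StableEq φ p z} ∩ {z | UnstableEq φ q z}) := by
  refine dense_iff_inter_open.2 fun U hU hUne => ?_
  obtain ⟨V, hV, hVne, hbracket⟩ := exists_isOpen_forall_exists_stableEq had hmix hp hps hU hUne
  obtain ⟨y, hyV, hqy⟩ := (dense_unstableEq had hmix hq hqs).inter_open_nonempty V hV hVne
  obtain ⟨w, hwU, hpw, hyw⟩ := hbracket y hyV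
  exact ⟨w, hwU, hpw, UnstableEq.trans hqy hyw⟩

end Dynamics

variable {X : Type*} [MetricSpace X] [CompactSpace X]

theorem sync_periodic_stable_unstable_dense_general (φ : X ≃ₜ X) (εX η lam : ℝ)
    (had : IsAdapted φ η lam) (hmix : Mixing φ)
    (p q : X) (hp : IsPeriodic φ p) (hq : IsPeriodic φ q)
    (hps : IsSyncPt φ (min η (εX / 2)) p) (hqs : IsSyncPt φ (min η (εX / 2)) q) :
    Dense {z : X | StableEq φ p z} ∧ Dense {z : X | UnstableEq φ q z} ∧
      Dense ({z : X | StableEq φ p z} ∩ {z : X | UnstableEq φ q z}) := by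
  have hps' := hps.mono (min_le_left η (εX / 2))
  have hqs' := hqs.mono (min_le_left η (εX / 2))
  exact ⟨dense_stableEq had hmix hp hps', dense_unstableEq had hmix hq hqs',
    dense_stableEq_inter_unstableEq had hmix hp hq hps' hqs'⟩

/-- in a mixing synchronizing system, for synchronizing periodic
points `p, q`, the sets `Xˢ(p)`, `Xᵘ(q)` and `Xˢ(p) ∩ Xᵘ(q)` are dense. -/
theorem sync_periodic_stable_unstable_dense (φ : X ≃ₜ X) (εX η lam : ℝ)
    (hexp : IsExpansive φ εX) (had : IsAdapted φ η lam) (hmix : Mixing φ)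
    (p q : X) (hp : IsPeriodic φ p) (hq : IsPeriodic φ q)
    (hps : IsSyncPt φ (min η (εX / 2)) p) (hqs : IsSyncPt φ (min η (εX / 2)) q) :
    Dense {z : X | StableEq φ p z} ∧ Dense {z : X | UnstableEq φ q z} ∧
      Dense ({z : X | StableEq φ p z} ∩ {z : X | UnstableEq φ q z}) :=
  sync_periodic_stable_unstable_dense_general φ εX η lam had hmix p q hp hq hps hqs

end Paper
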